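/- arXiv:2012.11170 — 5 statements merged into one kernel-verified Lean document; each statement's English description precedes it below -/
import Mathlib

section
/- Let d ∈ ℕ and let Λ = (λ_n)_{n∈ℤ} be an incompressible sequence of complex numbers of density d, and let 0 < ε ≤ (2d)⁻¹. Then every connected component of the union ⋃_{n∈ℤ} D_ε(λ_n) of open discs of radius ε centered at the λ_n contains at most d of the discs; that is, for every connected component C of this union, card{m ∈ ℤ : D_ε(λ_m) ⊆ C} ≤ d. -/
/-!
Projecting a connected component `C` of the union of discs to the real axis gives an interval,
covered by the intervals `(Re λ_n - ε, Re λ_n + ε)`. If `C` contained discs centred at `λ` and `μ`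
with `Re μ > Re λ + 1`, then `(Re λ - ε, Re λ + 1)`, of length `1 + ε`, would be covered by those
intervals with `|Re λ_n - (Re λ + 1/2)| ≤ 1`; there are at most `d` of them, of total length
`2dε ≤ 1`. Hence all discs in `C` have centres in one strip `|Re z - t| ≤ 1`.
-/

/-- A sequence `Λ : ℤ → ℂ` is *incompressible of density `d`* if every vertical
strip `[t-1, t+1] × ℝ` contains at most `d` entries of the sequence. -/
def Incompressible (d : ℕ) (Λ : ℤ → ℂ) : Prop :=
  ∀ t : ℝ, {n : ℤ | |(Λ n).re - t| ≤ 1}.encard ≤ (d : ℕ∞)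

open Set Metric MeasureTheory

theorem sub_le_of_Ioo_subset_biUnion_Ioo {ι : Type*} {s : Set ι} {k : ℕ} (hs : s.encard ≤ k)
    {f : ι → ℝ} {r a b : ℝ} (hr : 0 ≤ r) (h : Ioo a b ⊆ ⋃ i ∈ s, Ioo (f i - r) (f i + r)) :
    b - a ≤ k * (2 * r) := by
  obtain ⟨hfin, hcard⟩ := encard_le_coe_iff_finite_ncard_le.mp hs
  lift s to Finset ι using hfin
  rw [ncard_coe_finset] at hcard
  have hvol : ENNReal.ofReal (b - a) ≤ ENNReal.ofReal (k * (2 * r)) := calc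
    ENNReal.ofReal (b - a) = volume (Ioo a b) := Real.volume_Ioo.symm
    _ ≤ ∑ i ∈ s, volume (Ioo (f i - r) (f i + r)) :=
        (measure_mono (by simpa using h)).trans (measure_biUnion_finset_le _ _)
    _ = s.card * ENNReal.ofReal (2 * r) := by simp [Real.volume_Ioo, two_mul]
    _ ≤ k * ENNReal.ofReal (2 * r) := by gcongr
    _ = ENNReal.ofReal (k * (2 * r)) := by
        rw [ENNReal.ofReal_mul (Nat.cast_nonneg k), ENNReal.ofReal_natCast]
  exact (ENNReal.ofReal_le_ofReal_iff (by positivity)).mp hvol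

theorem not_Icc_subset_iUnion_Ioo {ι : Type*} {d : ℕ} {f : ι → ℝ}
    (hf : ∀ t : ℝ, {i | |f i - t| ≤ 1}.encard ≤ d) {ε : ℝ} (hε0 : 0 < ε) (hεd : 2 * d * ε ≤ 1)
    (i₀ : ι) : ¬ Icc (f i₀) (f i₀ + 1) ⊆ ⋃ i, Ioo (f i - ε) (f i + ε) := by
  intro hcov
  set t := f i₀
  set T := {i | |f i - (t + 1 / 2)| ≤ 1}
  have hi₀ : i₀ ∈ T := show |t - (t + 1 / 2)| ≤ 1 by norm_num
  have hd : (1 : ℝ) ≤ d := by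
    have : (1 : ℕ∞) ≤ d := (one_le_encard_iff_nonempty.mpr ⟨i₀, hi₀⟩).trans (hf _)
    exact_mod_cast this
  have hε : ε ≤ 1 / 2 := by nlinarith
  have hT : Ioo (t - ε) (t + 1) ⊆ ⋃ i ∈ T, Ioo (f i - ε) (f i + ε) := by
    intro x ⟨hx₁, hx₂⟩
    by_cases hxt : x < t
    · exact mem_biUnion hi₀ ⟨by linarith, by linarith⟩
    · obtain ⟨i, hi⟩ := mem_iUnion.mp (hcov ⟨not_lt.mp hxt, hx₂.le⟩)
      refine mem_biUnion (show |f i - (t + 1 / 2)| ≤ 1 from abs_le.mpr ⟨?_, ?_⟩) hi <;>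
        linarith [hi.1, hi.2]
  linarith [sub_le_of_Ioo_subset_biUnion_Ioo (hf (t + 1 / 2)) hε0.le hT]

theorem abs_re_sub_lt_of_mem_ball {z w : ℂ} {r : ℝ} (h : w ∈ ball z r) : |w.re - z.re| < r :=
  (Complex.sub_re w z ▸ Complex.abs_re_le_norm (w - z)).trans_lt (mem_ball_iff_norm.mp h)

theorem abs_re_sub_le_one_of_isPreconnected {d : ℕ} {Λ : ℤ → ℂ} (hΛ : Incompressible d Λ)
    {ε : ℝ} (hε0 : 0 < ε) (hεd : 2 * d * ε ≤ 1) {P : Set ℂ} (hP : IsPreconnected P)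
    (hPU : P ⊆ ⋃ n, ball (Λ n) ε) {m n : ℤ} (hm : Λ m ∈ P) (hn : Λ n ∈ P) :
    |(Λ m).re - (Λ n).re| ≤ 1 := by
  suffices h : ∀ m n, Λ m ∈ P → Λ n ∈ P → (Λ m).re - (Λ n).re ≤ 1 from
    abs_sub_le_iff.mpr ⟨h m n hm hn, h n m hn hm⟩
  intro m n hm hn
  by_contra! hmn
  refine not_Icc_subset_iUnion_Ioo (f := fun k ↦ (Λ k).re) hΛ hε0 hεd n fun x hx ↦ ?_
  have hxP : x ∈ Complex.re '' P :=
    (hP.image _ Complex.continuous_re.continuousOn).ordConnected.out ⟨_, hn, rfl⟩ ⟨_, hm, rfl⟩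
      ⟨hx.1, by linarith [hx.2]⟩
  obtain ⟨w, hwP, rfl⟩ := hxP
  obtain ⟨k, hk⟩ := mem_iUnion.mp (hPU hwP)
  have hwk := abs_sub_lt_iff.mp (abs_re_sub_lt_of_mem_ball hk)
  exact mem_iUnion.mpr ⟨k, by constructor <;> linarith⟩

/-- Every connected component of the union of the discs `D_ε(λ_n)` contains at most
`d` of the discs, provided `0 < ε ≤ (2d)⁻¹` and `Λ` is incompressible of density `d`. -/
theorem stmt0 (d : ℕ) (Λ : ℤ → ℂ) (hΛ : Incompressible d Λ)
    (ε : ℝ) (hε0 : 0 < ε) (hε : ε ≤ (2 * (d : ℝ))⁻¹) :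
    ∀ z ∈ ⋃ n : ℤ, Metric.ball (Λ n) ε,
      {m : ℤ | Metric.ball (Λ m) ε ⊆
          connectedComponentIn (⋃ n : ℤ, Metric.ball (Λ n) ε) z}.encard ≤ (d : ℕ∞) := by
  intro z _
  have h2d : (0 : ℝ) < 2 * d := by
    rcases Nat.eq_zero_or_pos d with rfl | _
    · simp only [CharP.cast_eq_zero, mul_zero, inv_zero] at hε
      linarith
    · positivity
  have hεd : 2 * d * ε ≤ 1 := by
    calc 2 * d * ε ≤ 2 * d * (2 * (d : ℝ))⁻¹ := by gcongr
      _ = 1 := mul_inv_cancel₀ h2d.ne'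
  set S := {m : ℤ | ball (Λ m) ε ⊆ connectedComponentIn (⋃ n, ball (Λ n) ε) z}
  rcases S.eq_empty_or_nonempty with hS | ⟨n, hn⟩
  · simp [hS]
  calc S.encard ≤ {m | |(Λ m).re - (Λ n).re| ≤ 1}.encard := encard_mono fun m hm ↦
        abs_re_sub_le_one_of_isPreconnected hΛ hε0 hεd isPreconnected_connectedComponentIn
          (connectedComponentIn_subset _ _) (hm (mem_ball_self hε0)) (hn (mem_ball_self hε0))
    _ ≤ d := hΛ _
end

section
/- Let Λ₀ = (λ_n⁰)_{n∈ℤ} be an incompressible sequence of complex numbers of density d₀ ∈ ℕ, and let Λ = (λ_n)_{n∈ℤ} be a sequence of complex numbers such that |λ_n − λ_n⁰| < M for all n ∈ ℤ, for some M > 0. Then Λ is an incompressible sequence of density d = d₀·⌈M+1⌉, where ⌈x⌉ denotes the smallest integer k with x ≤ k. -/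
lemma encard_biUnion_range_le {α : Type*} (S : ℕ → Set α) (d : ℕ)
    (h : ∀ j, (S j).encard ≤ (d : ℕ∞)) (K : ℕ) :
    (⋃ j ∈ Finset.range K, S j).encard ≤ ((K * d : ℕ) : ℕ∞) := by
  induction K with
  | zero => simp
  | succ K ih =>
    rw [Finset.range_add_one, Finset.set_biUnion_insert]
    calc (S K ∪ ⋃ j ∈ Finset.range K, S j).encard
        ≤ (S K).encard + (⋃ j ∈ Finset.range K, S j).encard := Set.encard_union_le _ _
      _ ≤ (d : ℕ∞) + ((K * d : ℕ) : ℕ∞) := add_le_add (h K) ih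
      _ = (((K + 1) * d : ℕ) : ℕ∞) := by push_cast; ring

/-- If `Λ₀` is incompressible of density `d₀` and `|Λ n - Λ₀ n| < M` for all `n`,
then `Λ` is incompressible of density `d₀ * ⌈M + 1⌉`. -/
theorem stmt1 (d₀ : ℕ) (Λ₀ Λ : ℤ → ℂ) (hΛ₀ : Incompressible d₀ Λ₀)
    (M : ℝ) (hM : 0 < M) (hclose : ∀ n : ℤ, ‖Λ n - Λ₀ n‖ < M) :
    Incompressible (d₀ * ⌈M + 1⌉₊) Λ := by
  intro t
  set K := ⌈M + 1⌉₊ with hK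
  have hsub : {n : ℤ | |(Λ n).re - t| ≤ 1} ⊆
      ⋃ j ∈ Finset.range K, {n : ℤ | |(Λ₀ n).re - (t - M + 2 * j)| ≤ 1} := by
    intro n hn
    simp only [Set.mem_setOf_eq] at hn
    have hre : |(Λ₀ n).re - (Λ n).re| < M := by
      have := hclose n
      have h1 : |(Λ₀ n - Λ n).re| ≤ ‖Λ₀ n - Λ n‖ := Complex.abs_re_le_norm _
      have h2 : ‖Λ₀ n - Λ n‖ = ‖Λ n - Λ₀ n‖ := norm_sub_rev _ _
      simpa [Complex.sub_re] using lt_of_le_of_lt (h2 ▸ h1) this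
    set x := (Λ₀ n).re with hx
    have hlow : t - M - 1 ≤ x := by
      have := abs_lt.mp hre
      have := abs_le.mp hn
      linarith [this.1, (abs_lt.mp hre).1]
    have hhigh : x < t + M + 1 := by
      have h1 := (abs_lt.mp hre).2
      have h2 := (abs_le.mp hn).2
      linarith
    set y := x - (t - M - 1) with hy
    have hy0 : 0 ≤ y := by linarith
    set j := ⌊y / 2⌋₊ with hj
    have hjK : j < K := by
      have hyu : y < 2 * (M + 1) := by simp [hy]; linarith
      have hMK : M + 1 ≤ (K : ℝ) := Nat.le_ceil _
      have : y / 2 < (K : ℝ) := by linarith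
      exact (Nat.floor_lt (by positivity)).mpr this
    have h2j : 2 * (j : ℝ) ≤ y := by
      have := Nat.floor_le (show (0:ℝ) ≤ y / 2 by positivity)
      linarith [this]
    have hylt : y < 2 * j + 2 := by
      have := Nat.lt_floor_add_one (y / 2)
      linarith
    refine Set.mem_biUnion (Finset.mem_range.mpr hjK) ?_
    simp only [Set.mem_setOf_eq]
    rw [abs_le]
    constructor <;> [skip; skip] <;>
      (have : x - (t - M + 2 * j) = y - (1 + 2 * j) := by simp [hy]; ring
       rw [this]) <;> linarith
  calc {n : ℤ | |(Λ n).re - t| ≤ 1}.encard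
      ≤ (⋃ j ∈ Finset.range K, {n : ℤ | |(Λ₀ n).re - (t - M + 2 * j)| ≤ 1}).encard :=
        Set.encard_mono hsub
    _ ≤ ((K * d₀ : ℕ) : ℕ∞) := encard_biUnion_range_le _ _ (fun j => hΛ₀ _) K
    _ = ((d₀ * K : ℕ) : ℕ∞) := by rw [Nat.mul_comm]
end

section
/- Let p ∈ [1,∞) and let N₁, N₂ be measurable complex-valued functions on the triangle Ω = {(x,t) : 0 ≤ t ≤ x ≤ 1} with finite X_{1,p}-norms (respectively finite X_{∞,p}-norms). Then the composition kernel N(x,t) := (N₁*N₂)(x,t) := ∫_t^x N₁(x,ξ) N₂(ξ,t) dξ satisfies ‖N₁*N₂‖_{X_{1,p}} ≤ ‖N₁‖_{X_{1,p}} · ‖N₂‖_{X_{1,p}} (respectively ‖N₁*N₂‖_{X_{∞,p}} ≤ ‖N₁‖_{X_{∞,p}} · ‖N₂‖_{X_{∞,p}}); i.e., the spaces X_{1,p}(Ω) and X_{∞,p}(Ω) are Banach algebras under the composition of kernels. -/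
/-!
Both estimates are Minkowski's integral inequality for a Volterra kernel. For fixed `t`, Hölder's
inequality with weight `b = |N₂(·,t)|` gives
`(∫ |N₁(x,ξ)| b(ξ) dξ)^p ≤ (∫ |N₁(x,ξ)|^p b(ξ) dξ) (∫ b)^(p-1)`; integrating in `x` and swapping
the integrals bounds `∫_t^1 |(N₁*N₂)(x,t)|^p dx` by `‖N₁‖^p (∫_t^1 b)^p`, and Jensen's inequality
on an interval of length at most one bounds `(∫_t^1 b)^p` by `‖N₂‖^p`.

The reflection `(x,t) ↦ (1-t, 1-x)` maps `Ω` onto itself, exchanges the two norms and reverses the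
order of composition, so the `X_{∞,p}` estimate follows from the `X_{1,p}` one.
-/

open MeasureTheory
open scoped ENNReal

/-- The `X_{1,p}`-norm of a kernel on the triangle `Ω = {0 ≤ t ≤ x ≤ 1}`:
`‖f‖_{X_{1,p}} = ( esssup_{t∈[0,1]} ∫_t^1 |f(x,t)|^p dx )^{1/p}`. -/
noncomputable def X1pNorm (p : ℝ) (f : ℝ → ℝ → ℂ) : ℝ≥0∞ :=
  (essSup (fun t => ∫⁻ x in Set.Icc t 1, ENNReal.ofReal (‖f x t‖ ^ p))
      (volume.restrict (Set.Icc (0:ℝ) 1))) ^ (1 / p)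

/-- The `X_{∞,p}`-norm of a kernel on the triangle `Ω = {0 ≤ t ≤ x ≤ 1}`:
`‖f‖_{X_{∞,p}} = ( esssup_{x∈[0,1]} ∫_0^x |f(x,t)|^p dt )^{1/p}`. -/
noncomputable def XinfpNorm (p : ℝ) (f : ℝ → ℝ → ℂ) : ℝ≥0∞ :=
  (essSup (fun x => ∫⁻ t in Set.Icc (0:ℝ) x, ENNReal.ofReal (‖f x t‖ ^ p))
      (volume.restrict (Set.Icc (0:ℝ) 1))) ^ (1 / p)

/-- Composition of kernels: `(N₁ * N₂)(x,t) = ∫_t^x N₁(x,ξ) N₂(ξ,t) dξ`. -/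
noncomputable def kernelComp (N₁ N₂ : ℝ → ℝ → ℂ) : ℝ → ℝ → ℂ :=
  fun x t => ∫ ξ in t..x, N₁ x ξ * N₂ ξ t

namespace ENNReal

variable {α β : Type*} [MeasurableSpace α] [MeasurableSpace β] {p : ℝ}

theorem rpow_lintegral_mul_le (μ : Measure α) (hp : 1 ≤ p) {f g : α → ℝ≥0∞}
    (hf : AEMeasurable f μ) (hg : AEMeasurable g μ) :
    (∫⁻ a, f a * g a ∂μ) ^ p ≤ (∫⁻ a, f a ^ p * g a ∂μ) * (∫⁻ a, g a ∂μ) ^ (p - 1) := by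
  have hp0 : 0 < p := by linarith
  have hq : 0 ≤ 1 - 1 / p := by simp [inv_le_one_of_one_le₀ hp]
  have hholder := lintegral_mul_norm_pow_le (f := fun a => f a ^ p * g a)
    ((hf.pow_const p).mul hg) hg (p := 1 / p) (q := 1 - 1 / p) (by positivity) hq (by ring)
  have hfg : ∀ a, (f a ^ p * g a) ^ (1 / p) * g a ^ (1 - 1 / p) = f a * g a := fun a => by
    rw [mul_rpow_of_nonneg _ _ (by positivity), ← rpow_mul, mul_one_div_cancel hp0.ne', rpow_one,
      mul_assoc, ← rpow_add_of_nonneg _ _ (by positivity) hq, add_sub_cancel, rpow_one]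
  simp only [hfg] at hholder
  calc (∫⁻ a, f a * g a ∂μ) ^ p
      ≤ ((∫⁻ a, f a ^ p * g a ∂μ) ^ (1 / p) * (∫⁻ a, g a ∂μ) ^ (1 - 1 / p)) ^ p :=
        rpow_le_rpow hholder hp0.le
    _ = (∫⁻ a, f a ^ p * g a ∂μ) * (∫⁻ a, g a ∂μ) ^ (p - 1) := by
        rw [mul_rpow_of_nonneg _ _ hp0.le, ← rpow_mul, ← rpow_mul, one_div_mul_cancel hp0.ne',
          rpow_one, sub_mul, one_div_mul_cancel hp0.ne', one_mul]

theorem rpow_lintegral_le_lintegral_rpow (μ : Measure α) (hμ : μ Set.univ ≤ 1) (hp : 1 ≤ p)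
    {f : α → ℝ≥0∞} (hf : AEMeasurable f μ) :
    (∫⁻ a, f a ∂μ) ^ p ≤ ∫⁻ a, f a ^ p ∂μ := by
  have h := rpow_lintegral_mul_le μ hp hf (aemeasurable_const (b := (1 : ℝ≥0∞)))
  simp only [mul_one, lintegral_const, one_mul] at h
  exact h.trans (mul_le_of_le_one_right' (rpow_le_one hμ (sub_nonneg.2 hp)))

theorem lintegral_rpow_lintegral_mul_le {μ : Measure α} {ν : Measure β} [SFinite μ] [SFinite ν]
    (hp : 1 ≤ p) {K : α → β → ℝ≥0∞} (hK : Measurable (Function.uncurry K)) {b : β → ℝ≥0∞}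
    (hb : Measurable b) {A : ℝ≥0∞} (hA : ∀ᵐ ξ ∂ν, ∫⁻ x, K x ξ ^ p ∂μ ≤ A) :
    ∫⁻ x, (∫⁻ ξ, K x ξ * b ξ ∂ν) ^ p ∂μ ≤ A * (∫⁻ ξ, b ξ ∂ν) ^ p := by
  set B := ∫⁻ ξ, b ξ ∂ν
  have hKb : Measurable fun z : α × β => K z.1 z.2 ^ p * b z.2 :=
    (hK.pow_const p).mul (hb.comp measurable_snd)
  calc ∫⁻ x, (∫⁻ ξ, K x ξ * b ξ ∂ν) ^ p ∂μ
      ≤ ∫⁻ x, (∫⁻ ξ, K x ξ ^ p * b ξ ∂ν) * B ^ (p - 1) ∂μ :=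
        lintegral_mono fun x => rpow_lintegral_mul_le ν hp
          (hK.comp measurable_prodMk_left).aemeasurable hb.aemeasurable
    _ = (∫⁻ ξ, (∫⁻ x, K x ξ ^ p ∂μ) * b ξ ∂ν) * B ^ (p - 1) := by
        rw [lintegral_mul_const _ hKb.lintegral_prod_right', lintegral_lintegral_swap
          hKb.aemeasurable]
        congr 1
        exact lintegral_congr fun ξ =>
          lintegral_mul_const (b ξ) ((hK.comp measurable_prodMk_right).pow_const p)
    _ ≤ (∫⁻ ξ, A * b ξ ∂ν) * B ^ (p - 1) := by
        gcongr ?_ * _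
        exact lintegral_mono_ae (hA.mono fun ξ hξ => mul_le_mul_left hξ _)
    _ = A * (B ^ (1 : ℝ) * B ^ (p - 1)) := by rw [lintegral_const_mul _ hb, rpow_one, mul_assoc]
    _ = A * B ^ p := by
        rw [← rpow_add_of_nonneg _ _ zero_le_one (sub_nonneg.2 hp), add_sub_cancel]

end ENNReal

lemma ofReal_norm_rpow {E : Type*} [NormedAddCommGroup E] (z : E) {p : ℝ} (hp : 0 ≤ p) :
    ENNReal.ofReal (‖z‖ ^ p) = ‖z‖ₑ ^ p := by
  rw [← ENNReal.ofReal_rpow_of_nonneg (norm_nonneg z) hp, ofReal_norm]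

def kernelReflect (f : ℝ → ℝ → ℂ) : ℝ → ℝ → ℂ := fun x t => f (1 - t) (1 - x)

lemma Measurable.kernelReflect {f : ℝ → ℝ → ℂ} (hf : Measurable (Function.uncurry f)) :
    Measurable (Function.uncurry (kernelReflect f)) :=
  hf.comp ((measurable_const.sub measurable_snd).prodMk (measurable_const.sub measurable_fst))

lemma kernelComp_kernelReflect (N₁ N₂ : ℝ → ℝ → ℂ) :
    kernelComp (kernelReflect N₁) (kernelReflect N₂) = kernelReflect (kernelComp N₂ N₁) := by
  ext x t
  simp only [kernelComp, kernelReflect]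
  rw [intervalIntegral.integral_comp_sub_left (fun ξ => N₁ ξ (1 - x) * N₂ (1 - t) ξ) 1]
  simp_rw [mul_comm]

lemma measurePreserving_one_sub_restrict (a b : ℝ) :
    MeasurePreserving (fun x : ℝ => 1 - x) (volume.restrict (Set.Icc (1 - b) (1 - a)))
      (volume.restrict (Set.Icc a b)) := by
  simpa using (volume.measurePreserving_sub_left 1).restrict_preimage_emb
    (measurableEmbedding_subLeft 1) (Set.Icc a b)

lemma X1pNorm_kernelReflect (p : ℝ) (f : ℝ → ℝ → ℂ) :
    X1pNorm p (kernelReflect f) = XinfpNorm p f := by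
  have inner (t : ℝ) : ∫⁻ x in Set.Icc t 1, ENNReal.ofReal (‖f (1 - t) (1 - x)‖ ^ p) =
      ∫⁻ s in Set.Icc 0 (1 - t), ENNReal.ofReal (‖f (1 - t) s‖ ^ p) := by
    simpa using (measurePreserving_one_sub_restrict 0 (1 - t)).lintegral_comp_emb
      (measurableEmbedding_subLeft 1) (fun s => ENNReal.ofReal (‖f (1 - t) s‖ ^ p))
  simp only [X1pNorm, XinfpNorm, kernelReflect, inner]
  congr 1
  have h := (measurableEmbedding_subLeft (1 : ℝ)).essSup_map_measure
    (μ := volume.restrict (Set.Icc 0 1))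
    (g := fun x => ∫⁻ s in Set.Icc 0 x, ENNReal.ofReal (‖f x s‖ ^ p))
  have hmap : (volume.restrict (Set.Icc (0 : ℝ) 1)).map (fun x => 1 - x) =
      volume.restrict (Set.Icc 0 1) := by
    simpa using (measurePreserving_one_sub_restrict 0 1).map_eq
  rw [hmap] at h
  exact h.symm

lemma X1pNorm_eq {p : ℝ} (hp : 0 ≤ p) (f : ℝ → ℝ → ℂ) :
    X1pNorm p f = essSup (fun t => ∫⁻ x in Set.Icc t 1, ‖f x t‖ₑ ^ p)
      (volume.restrict (Set.Icc (0 : ℝ) 1)) ^ (1 / p) := by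
  simp only [X1pNorm, ofReal_norm_rpow _ hp]

lemma enorm_kernelComp_le (N₁ N₂ : ℝ → ℝ → ℂ) {t x : ℝ} (hx : x ∈ Set.Icc t 1) :
    ‖kernelComp N₁ N₂ x t‖ₑ ≤
      ∫⁻ ξ in Set.Icc t 1, (if ξ ≤ x then ‖N₁ x ξ‖ₑ else 0) * ‖N₂ ξ t‖ₑ := by
  rw [kernelComp, intervalIntegral.integral_of_le hx.1]
  calc ‖∫ ξ in Set.Ioc t x, N₁ x ξ * N₂ ξ t‖ₑ
      ≤ ∫⁻ ξ in Set.Ioc t x, ‖N₁ x ξ * N₂ ξ t‖ₑ := enorm_integral_le_lintegral_enorm _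
    _ = ∫⁻ ξ in Set.Ioc t x, (if ξ ≤ x then ‖N₁ x ξ‖ₑ else 0) * ‖N₂ ξ t‖ₑ :=
        setLIntegral_congr_fun measurableSet_Ioc fun ξ hξ => by rw [if_pos hξ.2, enorm_mul]
    _ ≤ _ := lintegral_mono_set (Set.Ioc_subset_Icc_self.trans (Set.Icc_subset_Icc_right hx.2))

lemma setLIntegral_enorm_kernelComp_rpow_le {p : ℝ} (hp : 1 ≤ p) {N₁ N₂ : ℝ → ℝ → ℂ}
    (hm₁ : Measurable (Function.uncurry N₁)) (hm₂ : Measurable (Function.uncurry N₂))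
    {t : ℝ} (ht : 0 ≤ t) {A : ℝ≥0∞}
    (hA : ∀ᵐ ξ ∂(volume.restrict (Set.Icc (0 : ℝ) 1)), ∫⁻ x in Set.Icc ξ 1, ‖N₁ x ξ‖ₑ ^ p ≤ A) :
    ∫⁻ x in Set.Icc t 1, ‖kernelComp N₁ N₂ x t‖ₑ ^ p ≤
      A * ∫⁻ ξ in Set.Icc t 1, ‖N₂ ξ t‖ₑ ^ p := by
  have hp0 : 0 < p := by linarith
  set K : ℝ → ℝ → ℝ≥0∞ := fun x ξ => if ξ ≤ x then ‖N₁ x ξ‖ₑ else 0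
  have hK : Measurable (Function.uncurry K) :=
    Measurable.ite (measurableSet_le measurable_snd measurable_fst) hm₁.enorm measurable_const
  have hb : Measurable fun ξ => ‖N₂ ξ t‖ₑ := (hm₂.comp measurable_prodMk_right).enorm
  have hKA : ∀ᵐ ξ ∂(volume.restrict (Set.Icc t 1)), ∫⁻ x in Set.Icc t 1, K x ξ ^ p ≤ A := by
    filter_upwards [ae_restrict_of_ae_restrict_of_subset (Set.Icc_subset_Icc_left ht) hA]
      with ξ hξ
    calc ∫⁻ x in Set.Icc t 1, K x ξ ^ p
        = ∫⁻ x in Set.Icc t 1, (Set.Ici ξ).indicator (fun x => ‖N₁ x ξ‖ₑ ^ p) x :=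
          lintegral_congr fun x => by
            by_cases h : ξ ≤ x <;> simp [K, h, ENNReal.zero_rpow_of_pos hp0]
      _ = ∫⁻ x in Set.Ici ξ ∩ Set.Icc t 1, ‖N₁ x ξ‖ₑ ^ p :=
          setLIntegral_indicator measurableSet_Ici _
      _ ≤ A := (lintegral_mono_set (t := Set.Icc ξ 1) fun x hx => ⟨hx.1, hx.2.2⟩).trans hξ
  have hvol : volume.restrict (Set.Icc t 1) Set.univ ≤ 1 := by
    rw [Measure.restrict_apply_univ, Real.volume_Icc]
    exact ENNReal.ofReal_le_one.2 (by linarith)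
  calc ∫⁻ x in Set.Icc t 1, ‖kernelComp N₁ N₂ x t‖ₑ ^ p
      ≤ ∫⁻ x in Set.Icc t 1, (∫⁻ ξ in Set.Icc t 1, K x ξ * ‖N₂ ξ t‖ₑ) ^ p :=
        setLIntegral_mono' measurableSet_Icc fun x hx =>
          ENNReal.rpow_le_rpow (enorm_kernelComp_le N₁ N₂ hx) hp0.le
    _ ≤ A * (∫⁻ ξ in Set.Icc t 1, ‖N₂ ξ t‖ₑ) ^ p :=
        ENNReal.lintegral_rpow_lintegral_mul_le hp hK hb hKA
    _ ≤ A * ∫⁻ ξ in Set.Icc t 1, ‖N₂ ξ t‖ₑ ^ p := by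
        gcongr
        exact ENNReal.rpow_lintegral_le_lintegral_rpow _ hvol hp hb.aemeasurable

theorem X1pNorm_kernelComp_le {p : ℝ} (hp : 1 ≤ p) {N₁ N₂ : ℝ → ℝ → ℂ}
    (hm₁ : Measurable (Function.uncurry N₁)) (hm₂ : Measurable (Function.uncurry N₂)) :
    X1pNorm p (kernelComp N₁ N₂) ≤ X1pNorm p N₁ * X1pNorm p N₂ := by
  have hp0 : 0 ≤ p := by linarith
  rw [X1pNorm_eq hp0, X1pNorm_eq hp0, X1pNorm_eq hp0,
    ← ENNReal.mul_rpow_of_nonneg _ _ (by positivity)]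
  gcongr
  refine essSup_le_of_ae_le _ ?_
  filter_upwards [ENNReal.ae_le_essSup (fun t => ∫⁻ ξ in Set.Icc t 1, ‖N₂ ξ t‖ₑ ^ p),
    ae_restrict_mem measurableSet_Icc] with t ht₂ ht
  exact (setLIntegral_enorm_kernelComp_rpow_le hp hm₁ hm₂ ht.1 (ENNReal.ae_le_essSup _)).trans
    (by gcongr)

/-- The spaces `X_{1,p}(Ω)` and `X_{∞,p}(Ω)` are Banach algebras under composition of
kernels: `‖N₁ * N₂‖ ≤ ‖N₁‖ ⬝ ‖N₂‖` in each of the two norms. -/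
theorem stmt9 (p : ℝ) (hp : 1 ≤ p) (N₁ N₂ : ℝ → ℝ → ℂ)
    (hm₁ : Measurable (Function.uncurry N₁)) (hm₂ : Measurable (Function.uncurry N₂)) :
    (X1pNorm p N₁ ≠ ⊤ → X1pNorm p N₂ ≠ ⊤ →
      X1pNorm p (kernelComp N₁ N₂) ≤ X1pNorm p N₁ * X1pNorm p N₂) ∧
    (XinfpNorm p N₁ ≠ ⊤ → XinfpNorm p N₂ ≠ ⊤ →
      XinfpNorm p (kernelComp N₁ N₂) ≤ XinfpNorm p N₁ * XinfpNorm p N₂) := by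
  refine ⟨fun _ _ => X1pNorm_kernelComp_le hp hm₁ hm₂, fun _ _ => ?_⟩
  rw [← X1pNorm_kernelReflect, ← X1pNorm_kernelReflect, ← X1pNorm_kernelReflect,
    ← kernelComp_kernelReflect, mul_comm]
  exact X1pNorm_kernelComp_le hp hm₂.kernelReflect hm₁.kernelReflect
end

section
/- Let b₁ < 0 < b₂, k := −b₂/b₁ > 0, and let a, b, c, d ∈ ℂ with b ≠ 0. Let λ ∈ ℂ be such that the numbers 1 + d·e^{−ib₂λ} and 1 + a·e^{ib₁λ} are not both zero. Define vectors f, g ∈ L²([0,1];ℂ²) by f(x) := ( b·e^{ib₁λx}, −(1 + a·e^{ib₁λ})·e^{ib₂λx} ) and by requiring that the complex conjugate of g satisfies ḡ(x) = ( (1 + d·e^{−ib₂λ})·e^{−ib₁λx}, −k·b·e^{−ib₂λx} ). Then ‖f‖² · ‖g‖² = |⟨f, g⟩|² holds if and only if Im λ = 0 and k·|b|² = (1 + d·e^{−ib₂λ}) · conj(1 + a·e^{ib₁λ}). -/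
/-!
Write `A = 1 + a e^{ib₁λ}`, `D = 1 + d e^{-ib₂λ}` and `G c = ∫₀¹ e^{cx} dx`. The phases cancel in
`⟨f, g⟩`, which is the constant `b D + k A b`, while `‖f‖²` and `‖g‖²` are combinations of
`|b|², |A|², |D|², k²|b|²` with weights `G(∓2 b_j Im λ)`. For `Im λ = 0` every weight is `1` and the
claim is the equality case of Cauchy–Schwarz in `ℂ²`, read off from Lagrange's identity. For
`Im λ ≠ 0` the weights satisfy `G(c) G(-c) = (sinh(c/2) / (c/2))² > 1` for `c = 2 b₂ Im λ`, which
makes the weighted Cauchy–Schwarz inequality strict because `b ≠ 0`.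
-/

open MeasureTheory Complex ComplexConjugate

lemma Real.sq_lt_sinh_sq {y : ℝ} (hy : y ≠ 0) : y ^ 2 < Real.sinh y ^ 2 :=
  sq_lt_sq.2 (by rw [Real.abs_sinh]; exact Real.self_lt_sinh_iff.2 (abs_pos.2 hy))

lemma integral_exp_mul_eq_div {c : ℝ} (hc : c ≠ 0) :
    ∫ x in (0:ℝ)..1, Real.exp (c * x) = (Real.exp c - 1) / c := by
  rw [intervalIntegral.integral_comp_mul_left Real.exp hc, integral_exp]
  simp only [mul_one, mul_zero, Real.exp_zero, smul_eq_mul]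
  ring

lemma integral_exp_mul_pos (c : ℝ) : 0 < ∫ x in (0:ℝ)..1, Real.exp (c * x) :=
  intervalIntegral.intervalIntegral_pos_of_pos
    ((by fun_prop : Continuous _).intervalIntegrable _ _) (fun _ => Real.exp_pos _) one_pos

lemma one_lt_integral_exp_mul_mul_integral_exp_neg_mul {c : ℝ} (hc : c ≠ 0) :
    1 < (∫ x in (0:ℝ)..1, Real.exp (c * x)) * ∫ x in (0:ℝ)..1, Real.exp (-c * x) := by
  have hexp : (Real.exp c - 1) * (Real.exp (-c) - 1) = -(2 * Real.sinh (c / 2)) ^ 2 := by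
    have h₁ : Real.exp c = Real.exp (c / 2) ^ 2 := by rw [← Real.exp_nat_mul]; ring_nf
    have h₂ : Real.exp (-c) = Real.exp (-(c / 2)) ^ 2 := by rw [← Real.exp_nat_mul]; ring_nf
    have h₃ : Real.exp (c / 2) * Real.exp (-(c / 2)) = 1 := by rw [← Real.exp_add]; simp
    rw [Real.sinh_eq, h₁, h₂]
    linear_combination (Real.exp (c / 2) * Real.exp (-(c / 2)) - 1) * h₃
  have hsinh := Real.sq_lt_sinh_sq (div_ne_zero hc two_ne_zero)
  rw [integral_exp_mul_eq_div hc, integral_exp_mul_eq_div (neg_ne_zero.2 hc),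
    div_mul_div_comm, hexp, mul_neg, neg_div_neg_eq, one_lt_div (mul_self_pos.2 hc)]
  nlinarith

lemma one_le_integral_exp_mul_mul_integral_exp_neg_mul (c : ℝ) :
    1 ≤ (∫ x in (0:ℝ)..1, Real.exp (c * x)) * ∫ x in (0:ℝ)..1, Real.exp (-c * x) := by
  rcases eq_or_ne c 0 with rfl | hc
  · simp
  · exact (one_lt_integral_exp_mul_mul_integral_exp_neg_mul hc).le

lemma sq_norm_mul_cexp (u z : ℂ) : ‖u * cexp z‖ ^ 2 = ‖u‖ ^ 2 * Real.exp (2 * z.re) := by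
  rw [norm_mul, mul_pow, norm_exp, ← Real.exp_nat_mul]
  norm_num

lemma integral_sq_norm_mul_cexp_add (u₁ u₂ w₁ w₂ : ℂ) :
    ∫ x in (0:ℝ)..1, (‖u₁ * cexp (w₁ * x)‖ ^ 2 + ‖u₂ * cexp (w₂ * x)‖ ^ 2) =
      ‖u₁‖ ^ 2 * (∫ x in (0:ℝ)..1, Real.exp (2 * w₁.re * x)) +
        ‖u₂‖ ^ 2 * ∫ x in (0:ℝ)..1, Real.exp (2 * w₂.re * x) := by
  simp only [sq_norm_mul_cexp, re_mul_ofReal, ← mul_assoc]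
  rw [intervalIntegral.integral_add ((by fun_prop : Continuous _).intervalIntegrable _ _)
      ((by fun_prop : Continuous _).intervalIntegrable _ _),
    intervalIntegral.integral_const_mul, intervalIntegral.integral_const_mul]

lemma integral_mul_cexp_mul_mul_cexp_neg_add (u₁ u₂ v₁ v₂ w₁ w₂ : ℂ) :
    ∫ x in (0:ℝ)..1, (u₁ * cexp (w₁ * x) * (v₁ * cexp (-(w₁ * x))) +
      u₂ * cexp (w₂ * x) * (v₂ * cexp (-(w₂ * x)))) = u₁ * v₁ + u₂ * v₂ := by
  have hcancel (u v z : ℂ) : u * cexp z * (v * cexp (-z)) = u * v := by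
    rw [mul_mul_mul_comm, ← Complex.exp_add, add_neg_cancel, Complex.exp_zero, mul_one]
  simp only [hcancel, intervalIntegral.integral_const]
  simp

lemma Complex.lagrange_identity (u₁ u₂ v₁ v₂ : ℂ) :
    (‖u₁‖ ^ 2 + ‖u₂‖ ^ 2) * (‖v₁‖ ^ 2 + ‖v₂‖ ^ 2) =
      ‖u₁ * v₁ + u₂ * v₂‖ ^ 2 + ‖u₁ * conj v₂ - u₂ * conj v₁‖ ^ 2 := by
  simp only [Complex.sq_norm, Complex.normSq_apply, Complex.add_re, Complex.add_im,
    Complex.sub_re, Complex.sub_im, Complex.mul_re, Complex.mul_im, Complex.conj_re,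
    Complex.conj_im]
  ring

lemma Complex.sq_norm_mul_add_mul_eq_iff (u₁ u₂ v₁ v₂ : ℂ) :
    (‖u₁‖ ^ 2 + ‖u₂‖ ^ 2) * (‖v₁‖ ^ 2 + ‖v₂‖ ^ 2) = ‖u₁ * v₁ + u₂ * v₂‖ ^ 2 ↔
      u₁ * conj v₂ = u₂ * conj v₁ := by
  rw [lagrange_identity, add_eq_left, sq_eq_zero_iff, norm_eq_zero, sub_eq_zero]

lemma sq_mul_add_mul_le_weighted (x₁ x₂ y₁ y₂ : ℝ) {p₁ p₂ : ℝ} (hp₁ : 0 < p₁) (hp₂ : 0 < p₂) :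
    (x₁ * y₁ + x₂ * y₂) ^ 2 ≤ (x₁ ^ 2 * p₁ + x₂ ^ 2 * p₂) * (y₁ ^ 2 / p₁ + y₂ ^ 2 / p₂) := by
  have hgap : (x₁ ^ 2 * p₁ + x₂ ^ 2 * p₂) * (y₁ ^ 2 / p₁ + y₂ ^ 2 / p₂) - (x₁ * y₁ + x₂ * y₂) ^ 2 =
      p₁ * p₂ * (x₁ * y₂ / p₂ - x₂ * y₁ / p₁) ^ 2 := by
    field_simp
    ring
  rw [← sub_nonneg, hgap]
  positivity

lemma Complex.sq_norm_mul_add_mul_lt_weighted {u₁ v₂ : ℂ} (u₂ v₁ : ℂ) (hu₁ : u₁ ≠ 0)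
    (hv₂ : v₂ ≠ 0) {p₁ p₂ q₁ q₂ : ℝ} (hp₁ : 0 < p₁) (hp₂ : 0 < p₂) (h₁ : 1 ≤ p₁ * q₁)
    (h₂ : 1 < p₂ * q₂) :
    ‖u₁ * v₁ + u₂ * v₂‖ ^ 2 <
      (‖u₁‖ ^ 2 * p₁ + ‖u₂‖ ^ 2 * p₂) * (‖v₁‖ ^ 2 * q₁ + ‖v₂‖ ^ 2 * q₂) := by
  have htri : ‖u₁ * v₁ + u₂ * v₂‖ ≤ ‖u₁‖ * ‖v₁‖ + ‖u₂‖ * ‖v₂‖ :=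
    (norm_add_le _ _).trans_eq (by rw [norm_mul, norm_mul])
  have hq₁ : ‖v₁‖ ^ 2 / p₁ ≤ ‖v₁‖ ^ 2 * q₁ := by
    rw [div_le_iff₀ hp₁]; nlinarith [sq_nonneg ‖v₁‖]
  have hq₂ : ‖v₂‖ ^ 2 / p₂ < ‖v₂‖ ^ 2 * q₂ := by
    rw [div_lt_iff₀ hp₂]; nlinarith [pow_pos (norm_pos_iff.2 hv₂) 2]
  have hfac : 0 < ‖u₁‖ ^ 2 * p₁ + ‖u₂‖ ^ 2 * p₂ := by
    have := norm_pos_iff.2 hu₁; positivity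
  calc ‖u₁ * v₁ + u₂ * v₂‖ ^ 2 ≤ (‖u₁‖ * ‖v₁‖ + ‖u₂‖ * ‖v₂‖) ^ 2 :=
        pow_le_pow_left₀ (norm_nonneg _) htri 2
    _ ≤ (‖u₁‖ ^ 2 * p₁ + ‖u₂‖ ^ 2 * p₂) * (‖v₁‖ ^ 2 / p₁ + ‖v₂‖ ^ 2 / p₂) :=
        sq_mul_add_mul_le_weighted _ _ _ _ hp₁ hp₂
    _ < (‖u₁‖ ^ 2 * p₁ + ‖u₂‖ ^ 2 * p₂) * (‖v₁‖ ^ 2 * q₁ + ‖v₂‖ ^ 2 * q₂) :=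
        mul_lt_mul_of_pos_left (add_lt_add_of_le_of_lt hq₁ hq₂) hfac

lemma Complex.re_I_mul_ofReal_mul (β : ℝ) (z : ℂ) : (I * β * z).re = -(β * z.im) := by
  simp [Complex.mul_re]

theorem stmt17_general (b₁ b₂ : ℝ) (hb₁ : b₁ < 0) (hb₂ : 0 < b₂)
    (a b d : ℂ) (hb : b ≠ 0) (lam : ℂ) :
    ((∫ x in (0:ℝ)..1,
        (‖b * Complex.exp (Complex.I * b₁ * lam * x)‖ ^ 2 +
         ‖-(1 + a * Complex.exp (Complex.I * b₁ * lam)) *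
            Complex.exp (Complex.I * b₂ * lam * x)‖ ^ 2)) *
      (∫ x in (0:ℝ)..1,
        (‖(1 + d * Complex.exp (-(Complex.I * b₂ * lam))) *
            Complex.exp (-(Complex.I * b₁ * lam * x))‖ ^ 2 +
         ‖-(((-b₂ / b₁ : ℝ) : ℂ)) * b * Complex.exp (-(Complex.I * b₂ * lam * x))‖ ^ 2)) =
      ‖∫ x in (0:ℝ)..1,
          (b * Complex.exp (Complex.I * b₁ * lam * x)) *
              ((1 + d * Complex.exp (-(Complex.I * b₂ * lam))) *
                Complex.exp (-(Complex.I * b₁ * lam * x))) +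
            (-(1 + a * Complex.exp (Complex.I * b₁ * lam)) *
                Complex.exp (Complex.I * b₂ * lam * x)) *
              (-(((-b₂ / b₁ : ℝ) : ℂ)) * b *
                Complex.exp (-(Complex.I * b₂ * lam * x)))‖ ^ 2)
    ↔ (lam.im = 0 ∧
        (((-b₂ / b₁ : ℝ) : ℂ)) * ((‖b‖ : ℝ) : ℂ) ^ 2 =
          (1 + d * Complex.exp (-(Complex.I * b₂ * lam))) *
            (starRingEnd ℂ) (1 + a * Complex.exp (Complex.I * b₁ * lam))) := by
  set K : ℝ := -b₂ / b₁
  set A := 1 + a * cexp (I * b₁ * lam)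
  set D := 1 + d * cexp (-(I * b₂ * lam))
  have hneg (w : ℂ) (x : ℝ) : cexp (-(w * x)) = cexp (-w * x) := by rw [neg_mul]
  rw [integral_mul_cexp_mul_mul_cexp_neg_add]
  simp only [hneg]
  rw [integral_sq_norm_mul_cexp_add, integral_sq_norm_mul_cexp_add]
  simp only [Complex.neg_re, Complex.re_I_mul_ofReal_mul, neg_neg, mul_neg]
  by_cases ht : lam.im = 0
  · simp only [ht, mul_zero, neg_zero, zero_mul, Real.exp_zero, intervalIntegral.integral_const,
      sub_zero, smul_eq_mul, mul_one, true_and]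
    have hbb : b * conj (-(K : ℂ) * b) = -(K * (‖b‖ : ℂ) ^ 2) := by
      rw [map_mul, map_neg, conj_ofReal, mul_left_comm, mul_conj']
      ring
    rw [Complex.sq_norm_mul_add_mul_eq_iff, hbb, neg_mul, neg_inj,
      ← (RingHom.injective (starRingEnd ℂ)).eq_iff]
    simp only [map_mul, map_pow, conj_ofReal, conj_conj]
    rw [mul_comm (conj A)]
  · have hK : (K : ℂ) ≠ 0 := by
      simp only [K, ofReal_ne_zero]; exact div_ne_zero (neg_ne_zero.2 hb₂.ne') hb₁.ne
    have h₁ := one_le_integral_exp_mul_mul_integral_exp_neg_mul (-(2 * (b₁ * lam.im)))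
    have h₂ := one_lt_integral_exp_mul_mul_integral_exp_neg_mul (c := -(2 * (b₂ * lam.im)))
      (by simp [hb₂.ne', ht])
    rw [neg_neg] at h₁ h₂
    have hlt := Complex.sq_norm_mul_add_mul_lt_weighted (-A) D hb
      (mul_ne_zero (neg_ne_zero.2 hK) hb) (integral_exp_mul_pos _) (integral_exp_mul_pos _) h₁ h₂
    exact iff_of_false hlt.ne' (fun h => ht h.1)

/-- For the eigenfunctions `f` (of the unperturbed Dirac-type operator) and `g` (of its
adjoint) given by explicit exponentials, the Cauchy–Schwarz inequality
`‖f‖²‖g‖² ≥ |⟨f,g⟩|²` turns into equality iff `Im λ = 0` and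
`k|b|² = (1 + d e^{-ib₂λ}) conj(1 + a e^{ib₁λ})`, where `k = -b₂/b₁`. -/
theorem stmt17 (b₁ b₂ : ℝ) (hb₁ : b₁ < 0) (hb₂ : 0 < b₂)
    (a b c d : ℂ) (hb : b ≠ 0) (lam : ℂ)
    (hnz : ¬(1 + d * Complex.exp (-(Complex.I * b₂ * lam)) = 0 ∧
             1 + a * Complex.exp (Complex.I * b₁ * lam) = 0)) :
    ((∫ x in (0:ℝ)..1,
        (‖b * Complex.exp (Complex.I * b₁ * lam * x)‖ ^ 2 +
         ‖-(1 + a * Complex.exp (Complex.I * b₁ * lam)) *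
            Complex.exp (Complex.I * b₂ * lam * x)‖ ^ 2)) *
      (∫ x in (0:ℝ)..1,
        (‖(1 + d * Complex.exp (-(Complex.I * b₂ * lam))) *
            Complex.exp (-(Complex.I * b₁ * lam * x))‖ ^ 2 +
         ‖-(((-b₂ / b₁ : ℝ) : ℂ)) * b * Complex.exp (-(Complex.I * b₂ * lam * x))‖ ^ 2)) =
      ‖∫ x in (0:ℝ)..1,
          (b * Complex.exp (Complex.I * b₁ * lam * x)) *
              ((1 + d * Complex.exp (-(Complex.I * b₂ * lam))) *
                Complex.exp (-(Complex.I * b₁ * lam * x))) +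
            (-(1 + a * Complex.exp (Complex.I * b₁ * lam)) *
                Complex.exp (Complex.I * b₂ * lam * x)) *
              (-(((-b₂ / b₁ : ℝ) : ℂ)) * b *
                Complex.exp (-(Complex.I * b₂ * lam * x)))‖ ^ 2)
    ↔ (lam.im = 0 ∧
        (((-b₂ / b₁ : ℝ) : ℂ)) * ((‖b‖ : ℝ) : ℂ) ^ 2 =
          (1 + d * Complex.exp (-(Complex.I * b₂ * lam))) *
            (starRingEnd ℂ) (1 + a * Complex.exp (Complex.I * b₁ * lam))) :=
  stmt17_general b₁ b₂ hb₁ hb₂ a b d hb lam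
end

section
/- Let b₁ < 0 < b₂ and a, b, c, d ∈ ℂ, and define the characteristic determinant Δ₀(λ) := d + a·e^{i(b₁+b₂)λ} + (ad − bc)·e^{ib₁λ} + e^{ib₂λ}. If λ ∈ ℂ satisfies Δ₀(λ) = 0, then (1 + d·e^{−ib₂λ}) · (1 + a·e^{ib₁λ}) = bc · e^{i(b₁−b₂)λ}. Moreover, if in addition bc ≠ 0 and |Im λ| ≤ h for some h ≥ 0, then |1 + d·e^{−ib₂λ}|² + |1 + a·e^{ib₁λ}|² ≥ 2·|bc|·e^{−(b₂−b₁)h}. -/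
/-! Writing `w = e^{ib₁λ}` and `z = e^{ib₂λ}`, the determinant is `Δ₀ = d + a w z + (ad - bc) w + z`,
and dividing `Δ₀ = 0` by `z` gives the factorization `(1 + d z⁻¹)(1 + a w) = bc w z⁻¹`.
Taking norms, the two factors have product `|bc| e^{(b₂-b₁) Im λ} ≥ |bc| e^{-(b₂-b₁)h}`,
and `2xy ≤ x² + y²` turns this into the lower bound on the sum of squares. -/

open Complex

theorem mul_eq_of_charDet_eq_zero (b₁ b₂ a b c d lam : ℂ)
    (hroot : d + a * exp (I * (b₁ + b₂) * lam) + (a * d - b * c) * exp (I * b₁ * lam) +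
      exp (I * b₂ * lam) = 0) :
    (1 + d * exp (-(I * b₂ * lam))) * (1 + a * exp (I * b₁ * lam)) =
      b * c * exp (I * (b₁ - b₂) * lam) := by
  have hz : exp (I * b₂ * lam) ≠ 0 := exp_ne_zero _
  have hsum : exp (I * (b₁ + b₂) * lam) = exp (I * b₁ * lam) * exp (I * b₂ * lam) := by
    rw [← exp_add]; congr 1; ring
  have hdiff : exp (I * (b₁ - b₂) * lam) = exp (I * b₁ * lam) * (exp (I * b₂ * lam))⁻¹ := by
    rw [← exp_neg, ← exp_add]; congr 1; ring
  rw [hsum] at hroot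
  rw [hdiff, exp_neg]
  generalize exp (I * b₁ * lam) = w at hroot ⊢
  generalize exp (I * b₂ * lam) = z at hroot hz ⊢
  field_simp
  linear_combination hroot

theorem norm_exp_I_mul_ofReal_mul (t : ℝ) (lam : ℂ) :
    ‖exp (I * t * lam)‖ = Real.exp (-(t * lam.im)) := by
  rw [norm_exp]
  congr 1
  simp [mul_re, mul_im]

theorem exp_neg_mul_le_norm_exp_I_mul {b₁ b₂ h : ℝ} (hb : b₁ ≤ b₂) {lam : ℂ}
    (him : |lam.im| ≤ h) :
    Real.exp (-((b₂ - b₁) * h)) ≤ ‖exp (I * (b₁ - b₂) * lam)‖ := by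
  rw [← ofReal_sub, norm_exp_I_mul_ofReal_mul, Real.exp_le_exp]
  nlinarith [(abs_le.mp him).1]

theorem stmt18_general (b₁ b₂ : ℝ) (hb₁ : b₁ < 0) (hb₂ : 0 < b₂)
    (a b c d : ℂ) (lam : ℂ) (h : ℝ)
    (hroot : d + a * Complex.exp (Complex.I * (b₁ + b₂) * lam) +
        (a * d - b * c) * Complex.exp (Complex.I * b₁ * lam) +
        Complex.exp (Complex.I * b₂ * lam) = 0) :
    (1 + d * Complex.exp (-(Complex.I * b₂ * lam))) *
        (1 + a * Complex.exp (Complex.I * b₁ * lam)) =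
      b * c * Complex.exp (Complex.I * (b₁ - b₂) * lam) ∧
    (b * c ≠ 0 → |lam.im| ≤ h →
      ‖1 + d * Complex.exp (-(Complex.I * b₂ * lam))‖ ^ 2 +
          ‖1 + a * Complex.exp (Complex.I * b₁ * lam)‖ ^ 2 ≥
        2 * ‖b * c‖ * Real.exp (-((b₂ - b₁) * h))) := by
  have key := mul_eq_of_charDet_eq_zero b₁ b₂ a b c d lam hroot
  refine ⟨key, fun _ him => ?_⟩
  have hnorm := congrArg norm key
  rw [norm_mul, norm_mul (b * c)] at hnorm
  calc 2 * ‖b * c‖ * Real.exp (-((b₂ - b₁) * h))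
      ≤ 2 * (‖b * c‖ * ‖exp (I * (b₁ - b₂) * lam)‖) := by
        rw [mul_assoc]
        gcongr
        exact exp_neg_mul_le_norm_exp_I_mul (by linarith) him
    _ = 2 * ‖1 + d * exp (-(I * b₂ * lam))‖ * ‖1 + a * exp (I * b₁ * lam)‖ := by
        rw [← hnorm]; ring
    _ ≤ _ := two_mul_le_add_sq _ _

/-- If `λ` is a zero of the characteristic determinant
`Δ₀(λ) = d + a e^{i(b₁+b₂)λ} + (ad-bc) e^{ib₁λ} + e^{ib₂λ}`, then
`(1 + d e^{-ib₂λ})(1 + a e^{ib₁λ}) = bc e^{i(b₁-b₂)λ}`; moreover, if `bc ≠ 0` and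
`|Im λ| ≤ h`, then `|1 + d e^{-ib₂λ}|² + |1 + a e^{ib₁λ}|² ≥ 2|bc| e^{-(b₂-b₁)h}`. -/
theorem stmt18 (b₁ b₂ : ℝ) (hb₁ : b₁ < 0) (hb₂ : 0 < b₂)
    (a b c d : ℂ) (lam : ℂ) (h : ℝ) (hh : 0 ≤ h)
    (hroot : d + a * Complex.exp (Complex.I * (b₁ + b₂) * lam) +
        (a * d - b * c) * Complex.exp (Complex.I * b₁ * lam) +
        Complex.exp (Complex.I * b₂ * lam) = 0) :
    (1 + d * Complex.exp (-(Complex.I * b₂ * lam))) *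
        (1 + a * Complex.exp (Complex.I * b₁ * lam)) =
      b * c * Complex.exp (Complex.I * (b₁ - b₂) * lam) ∧
    (b * c ≠ 0 → |lam.im| ≤ h →
      ‖1 + d * Complex.exp (-(Complex.I * b₂ * lam))‖ ^ 2 +
          ‖1 + a * Complex.exp (Complex.I * b₁ * lam)‖ ^ 2 ≥
        2 * ‖b * c‖ * Real.exp (-((b₂ - b₁) * h))) :=
  stmt18_general b₁ b₂ hb₁ hb₂ a b c d lam h hroot
end
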